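/- Exchangeability identity: if S_n is a k-dimensional random walk whose increments, conditioned on a σ-algebra generated by an exchangeable event count Σ_n, remain exchangeable across the n steps, then E[Δ(x + S_n)·Σ_n] = Δ(x)·E[Σ_n], where Σ_n = Σ_{i=1}^n Σ_{j=1}^k 1{|ξ_i^{(j)}| > c}. -/

import Mathlib

/-!
Write the increments as a `k × n` matrix whose `k` rows (one per walk) are i.i.d. vectors `Y_j`.
Then `S_n = (Z(Y_j))_j` with `Z` the sum of the entries, and `Σ_n = ∑_j W(Y_j)` with `W` the
number of large entries. Multiplying row `j₀` of the Vandermonde matrix of `x + S_n` by `W(Y_{j₀})`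
and using the independence of the rows, `E[Δ(x + S_n) W(Y_{j₀})]` is the determinant with entries
`P_i(x_j) = E[(x_j + Z)^i]`, except in row `j₀`, where they are `Q_i(x_{j₀}) = E[(x_{j₀} + Z)^i W]`.
Here `P_i` is monic of degree `i` and `Q_i = (E W) P_i + D_i` with `deg D_i < i`. Summing over
`j₀` gives `k (E W) Δ(x)` plus the derivative at `t = 0` of `det((P_i + t D_i)(x_j))`, which
vanishes because `P_i + t D_i` is monic of degree `i`, so that this determinant is `Δ(x)` for
every `t`.
-/

open MeasureTheory ProbabilityTheory Filter Finset

noncomputable section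

/-- The Weyl chamber `{x : x 0 < x 1 < ... < x (k-1)}`. -/
def weyl (k : ℕ) : Set (Fin k → ℝ) := {x | ∀ i j : Fin k, i < j → x i < x j}

/-- The set of ordered pairs `(i,j)` with `i < j`. -/
def pairs (k : ℕ) : Finset (Fin k × Fin k) := Finset.univ.filter (fun p => p.1 < p.2)

/-- The Vandermonde determinant `Δ(x) = ∏_{i<j} (x j - x i)`. -/
def vdm (k : ℕ) (x : Fin k → ℝ) : ℝ := ∏ p ∈ pairs k, (x p.2 - x p.1)

/-- The perturbed Vandermonde product `Δ₁(x) = ∏_{i<j} (1 + |x j - x i|)`. -/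
def vdmOne (k : ℕ) (x : Fin k → ℝ) : ℝ := ∏ p ∈ pairs k, (1 + |x p.2 - x p.1|)

open Matrix Polynomial

theorem Matrix.hasDerivAt_det_add_smul {𝕜 n : Type*} [NontriviallyNormedField 𝕜] [Fintype n]
    [DecidableEq n] (A B : Matrix n n 𝕜) :
    HasDerivAt (fun t : 𝕜 => (A + t • B).det) (∑ j, (A.updateRow j (B j)).det) 0 := by
  let D : ContinuousMultilinearMap 𝕜 (fun _ : n => n → 𝕜) 𝕜 :=
    { (detRowAlternating : (n → 𝕜) [⋀^n]→ₗ[𝕜] 𝕜).toMultilinearMap with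
      cont := continuous_id.matrix_det }
  have hline : HasDerivAt (fun (t : 𝕜) (j : n) => A j + t • B j) B 0 :=
    hasDerivAt_pi.2 fun j => by
      simpa using ((hasDerivAt_id (0 : 𝕜)).smul_const (B j)).const_add (A j)
  have hD := (D.hasFDerivAt A).comp_hasDerivAt_of_eq (0 : 𝕜) hline (by ext; simp)
  convert hD using 1 <;> try rfl
  exact (D.linearDeriv_apply A B).symm

theorem Matrix.sum_det_updateRow_eq_zero {𝕜 n : Type*} [NontriviallyNormedField 𝕜] [Fintype n]
    [DecidableEq n] (A B : Matrix n n 𝕜) (h : ∀ t : 𝕜, (A + t • B).det = A.det) :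
    ∑ j, (A.updateRow j (B j)).det = 0 :=
  (A.hasDerivAt_det_add_smul B).unique <| by
    simpa only [h] using hasDerivAt_const (0 : 𝕜) A.det

theorem Polynomial.degree_sub_C_coeff_mul_lt {R : Type*} [Ring R] {p q : R[X]} {n : ℕ}
    (hp : p.natDegree = n) (hpm : p.Monic) (hq : q.natDegree ≤ n) :
    (q - C (q.coeff n) * p).degree < n := by
  rw [degree_lt_iff_coeff_zero]
  intro m hm
  rcases hm.eq_or_lt with rfl | hlt
  · simp [← hp, hpm.coeff_natDegree]
  · simp [coeff_eq_zero_of_natDegree_lt (hq.trans_lt hlt),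
      coeff_eq_zero_of_natDegree_lt (hp.trans_lt hlt)]

theorem Matrix.sum_det_updateRow_eval_eq {𝕜 : Type*} [NontriviallyNormedField 𝕜] {k : ℕ}
    (x : Fin k → 𝕜) (P Q : Fin k → 𝕜[X]) (α : 𝕜)
    (hPdeg : ∀ i, (P i).natDegree = i) (hPmonic : ∀ i, (P i).Monic)
    (hQdeg : ∀ i, (Q i).natDegree ≤ i) (hQcoeff : ∀ i, (Q i).coeff i = α) :
    ∑ j, ((of fun j i => (P i).eval (x j)).updateRow j (fun i => (Q i).eval (x j))).det
      = k * α * (vandermonde x).det := by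
  set A : Matrix (Fin k) (Fin k) 𝕜 := of fun j i => (P i).eval (x j)
  set D : Fin k → 𝕜[X] := fun i => Q i - C α * P i
  set B : Matrix (Fin k) (Fin k) 𝕜 := of fun j i => (D i).eval (x j)
  have hDdeg (t : 𝕜) (i : Fin k) : (t • D i).degree < (P i).degree := by
    refine (degree_smul_le ..).trans_lt ?_
    rw [degree_eq_natDegree (hPmonic i).ne_zero, hPdeg i]
    simpa only [hQcoeff i] using degree_sub_C_coeff_mul_lt (hPdeg i) (hPmonic i) (hQdeg i)
  have hA : A.det = (vandermonde x).det :=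
    (det_eval_matrixOfPolynomials_eq_det_vandermonde x P hPdeg hPmonic).symm
  have hpert (t : 𝕜) : (A + t • B).det = A.det := by
    have hAB : A + t • B = of fun j i => (P i + t • D i).eval (x j) := by
      ext j i; simp [A, B]
    rw [hAB, hA, det_eval_matrixOfPolynomials_eq_det_vandermonde]
    · intro i; rw [natDegree_add_eq_left_of_degree_lt (hDdeg t i), hPdeg]
    · exact fun i => (hPmonic i).add_of_left (hDdeg t i)
  have hrow (j : Fin k) : (A.updateRow j (fun i => (Q i).eval (x j))).det
      = α * A.det + (A.updateRow j (B j)).det := by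
    have hQ : (fun i => (Q i).eval (x j)) = α • A j + B j := by
      ext i; simp [A, B, D]
    rw [hQ, det_updateRow_add, det_updateRow_smul, updateRow_eq_self]
  rw [sum_congr rfl fun j _ => hrow j, sum_add_distrib, sum_det_updateRow_eq_zero A B hpert,
    sum_const, card_univ, Fintype.card_fin, nsmul_eq_mul, hA]
  ring

theorem continuous_vdm (k : ℕ) : Continuous (vdm k) :=
  continuous_finsetProd _ fun _ _ => (continuous_apply _).sub (continuous_apply _)

theorem vdm_eq_det_vandermonde (k : ℕ) (x : Fin k → ℝ) : vdm k x = (vandermonde x).det := by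
  rw [det_vandermonde, vdm, pairs, prod_filter, Fintype.prod_prod_type]
  refine prod_congr rfl fun i _ => ?_
  rw [← prod_filter]
  congr 1
  ext j; simp

section Integration

variable {ι : Type*} [Fintype ι] [DecidableEq ι] {E : ι → Type*}
  [∀ j, MeasurableSpace (E j)] {ν : ∀ j, Measure (E j)} [∀ j, SigmaFinite (ν j)]
  {F : ∀ j, E j → ι → ℝ}

theorem Matrix.det_eq_sum_sign_mul_prod_apply_perm (M : Matrix ι ι ℝ) :
    M.det = ∑ σ : Equiv.Perm ι, (Equiv.Perm.sign σ : ℝ) * ∏ j, M j (σ j) := by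
  rw [← det_transpose, det_apply']
  rfl

theorem integrable_det_pi (hF : ∀ j i, Integrable (fun z => F j z i) (ν j)) :
    Integrable (fun y => (of fun j i => F j (y j) i).det) (Measure.pi ν) := by
  simp_rw [Matrix.det_eq_sum_sign_mul_prod_apply_perm, of_apply]
  exact integrable_finsetSum _ fun σ _ =>
    (Integrable.fintype_prod_dep fun j => hF j (σ j)).const_mul _

theorem integral_det_pi (hF : ∀ j i, Integrable (fun z => F j z i) (ν j)) :
    ∫ y, (of fun j i => F j (y j) i).det ∂(Measure.pi ν)
      = (of fun j i => ∫ z, F j z i ∂(ν j)).det := by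
  simp_rw [Matrix.det_eq_sum_sign_mul_prod_apply_perm, of_apply]
  rw [integral_finsetSum _ fun σ _ =>
    (Integrable.fintype_prod_dep fun j => hF j (σ j)).const_mul _]
  refine sum_congr rfl fun σ _ => ?_
  rw [integral_const_mul, integral_fintype_prod_eq_prod (fun j z => F j z (σ j))]

end Integration

section MomentPoly

variable {E : Type*} [MeasurableSpace E] {ν : Measure E} {Z W : E → ℝ} {e : ℕ}

/-- `a ↦ ∫ (a + Z)^e W dν`, as a polynomial in `a` (see `integral_add_pow_mul`). -/
def momentPoly (ν : Measure E) (Z W : E → ℝ) (e : ℕ) : ℝ[X] :=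
  ∑ r ∈ range (e + 1), C (e.choose r * ∫ z, Z z ^ (e - r) * W z ∂ν) * X ^ r

theorem add_pow_mul_eq_sum (a b w : ℝ) (e : ℕ) :
    (a + b) ^ e * w = ∑ r ∈ range (e + 1), a ^ r * e.choose r * (b ^ (e - r) * w) := by
  rw [add_pow, sum_mul]
  exact sum_congr rfl fun r _ => by ring

theorem integrable_add_pow_mul (hZW : ∀ r ≤ e, Integrable (fun z => Z z ^ r * W z) ν)
    (a : ℝ) :
    Integrable (fun z => (a + Z z) ^ e * W z) ν := by
  simp_rw [add_pow_mul_eq_sum]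
  exact integrable_finsetSum _ fun r _ => (hZW _ (e.sub_le r)).const_mul _

theorem integral_add_pow_mul (hZW : ∀ r ≤ e, Integrable (fun z => Z z ^ r * W z) ν) (a : ℝ) :
    ∫ z, (a + Z z) ^ e * W z ∂ν = (momentPoly ν Z W e).eval a := by
  simp_rw [add_pow_mul_eq_sum]
  rw [integral_finsetSum _ fun r _ => (hZW _ (e.sub_le r)).const_mul _, momentPoly, eval_finsetSum]
  refine sum_congr rfl fun r _ => ?_
  rw [integral_const_mul]
  simp only [eval_mul, eval_C, eval_pow, eval_X]
  ring

theorem coeff_momentPoly (r : ℕ) :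
    (momentPoly ν Z W e).coeff r
      = if r ≤ e then e.choose r * ∫ z, Z z ^ (e - r) * W z ∂ν else 0 := by
  simp only [momentPoly, finsetSum_coeff, coeff_C_mul, coeff_X_pow, mul_ite, mul_one, mul_zero,
    sum_ite_eq, mem_range, Nat.lt_succ_iff]

theorem natDegree_momentPoly_le : (momentPoly ν Z W e).natDegree ≤ e :=
  natDegree_le_iff_coeff_eq_zero.2 fun r hr => by
    rw [coeff_momentPoly, if_neg (by exact_mod_cast hr.not_ge)]

theorem coeff_momentPoly_self : (momentPoly ν Z W e).coeff e = ∫ z, W z ∂ν := by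
  simp [coeff_momentPoly]

theorem monic_momentPoly_one [IsProbabilityMeasure ν] : (momentPoly ν Z (fun _ => 1) e).Monic :=
  monic_of_natDegree_le_of_coeff_eq_one e natDegree_momentPoly_le (by simp [coeff_momentPoly_self])

theorem natDegree_momentPoly_one [IsProbabilityMeasure ν] :
    (momentPoly ν Z (fun _ => 1) e).natDegree = e :=
  natDegree_eq_of_le_of_coeff_ne_zero natDegree_momentPoly_le (by simp [coeff_momentPoly_self])

end MomentPoly

theorem integral_vdm_add_mul_sum {k : ℕ} {E : Type*} [MeasurableSpace E] (ν : Measure E)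
    [IsProbabilityMeasure ν] {Z W : E → ℝ} (hZ : ∀ r < k, Integrable (fun z => Z z ^ r) ν)
    (hZW : ∀ r < k, Integrable (fun z => Z z ^ r * W z) ν) (x : Fin k → ℝ) :
    ∫ y, vdm k (fun j => x j + Z (y j)) * ∑ j, W (y j) ∂(Measure.pi fun _ : Fin k => ν)
      = vdm k x * ∫ y, ∑ j, W (y j) ∂(Measure.pi fun _ : Fin k => ν) := by
  set P : Fin k → ℝ[X] := fun i => momentPoly ν Z (fun _ => 1) i
  set Q : Fin k → ℝ[X] := fun i => momentPoly ν Z W i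
  set F : Fin k → Fin k → E → Fin k → ℝ :=
    fun j₀ j z i => (x j + Z z) ^ (i : ℕ) * if j = j₀ then W z else 1
  have hF (j₀ j i : Fin k) : Integrable (fun z => F j₀ j z i) ν := by
    by_cases h : j = j₀
    · simpa [F, h] using integrable_add_pow_mul (fun r hr => hZW r (hr.trans_lt i.isLt)) (x j)
    · simpa [F, h] using integrable_add_pow_mul (W := fun _ => 1)
        (fun r hr => by simpa using hZ r (hr.trans_lt i.isLt)) (x j)
  have hsplit (y : Fin k → E) : vdm k (fun j => x j + Z (y j)) * ∑ j, W (y j)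
      = ∑ j₀, (of fun j i => F j₀ j (y j) i).det := by
    rw [mul_sum]
    refine sum_congr rfl fun j₀ _ => ?_
    have hrow : (of fun j i => F j₀ j (y j) i) = of fun j i =>
        (if j = j₀ then W (y j) else 1) * vandermonde (fun j => x j + Z (y j)) j i := by
      ext j i
      simp [F, mul_comm]
    rw [hrow, det_mul_column, prod_ite_eq', if_pos (mem_univ _), vdm_eq_det_vandermonde, mul_comm]
  have hterm (j₀ : Fin k) :
      ∫ y, (of fun j i => F j₀ j (y j) i).det ∂(Measure.pi fun _ : Fin k => ν)
      = ((of fun j i => (P i).eval (x j)).updateRow j₀ (fun i => (Q i).eval (x j₀))).det := by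
    rw [integral_det_pi (hF j₀)]
    congr 1
    ext j i
    by_cases h : j = j₀
    · subst h
      simp [F, Q, integral_add_pow_mul (fun r hr => hZW r (hr.trans_lt i.isLt))]
    · simp [F, P, h, ← integral_add_pow_mul (W := fun _ => 1)
        (fun r hr => by simpa using hZ r (hr.trans_lt i.isLt))]
  have hW : ∫ y, ∑ j, W (y j) ∂(Measure.pi fun _ : Fin k => ν) = k * ∫ z, W z ∂ν := by
    rw [integral_finsetSum _ fun j _ => integrable_comp_eval (by simpa using hZW 0 j.pos)]
    have hWj (j : Fin k) : ∫ y, W (y j) ∂(Measure.pi fun _ : Fin k => ν) = ∫ z, W z ∂ν :=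
      integral_comp_eval (by simpa using (hZW 0 j.pos).aestronglyMeasurable)
    simp [hWj]
  simp_rw [hsplit]
  rw [integral_finsetSum _ fun j₀ _ => integrable_det_pi (hF j₀)]
  simp_rw [hterm]
  rw [sum_det_updateRow_eval_eq x P Q (∫ z, W z ∂ν) (fun _ => natDegree_momentPoly_one)
    (fun _ => monic_momentPoly_one) (fun _ => natDegree_momentPoly_le)
    (fun _ => coeff_momentPoly_self), hW, vdm_eq_det_vandermonde]
  ring

theorem ProbabilityTheory.iIndepFun.map_curry_eq_pi {Ω : Type*} [MeasurableSpace Ω]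
    {μ : Measure Ω} {κ ι β : Type*} [Fintype κ] [Fintype ι] [MeasurableSpace β]
    {X : κ × ι → Ω → β} (hX : iIndepFun X μ) (mX : ∀ p, Measurable (X p)) :
    μ.map (fun ω j i => X (j, i) ω)
      = Measure.pi fun j => Measure.pi fun i => μ.map (X (j, i)) := by
  have := hX.isProbabilityMeasure
  have (p : κ × ι) : IsProbabilityMeasure (μ.map (X p)) :=
    Measure.isProbabilityMeasure_map (mX p).aemeasurable
  have hcurry : (fun ω j i => X (j, i) ω)
      = MeasurableEquiv.curry κ ι β ∘ fun ω p => X p ω := rfl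
  rw [hcurry, ← Measure.map_map (by fun_prop) (measurable_pi_lambda _ mX),
    hX.map_fun_eq_pi_map fun p => (mX p).aemeasurable, ← Measure.infinitePi_eq_pi,
    Measure.infinitePi_map_curry (fun j i => μ.map (X (j, i))), Measure.infinitePi_eq_pi]
  simp_rw [Measure.infinitePi_eq_pi]

theorem MeasureTheory.memLp_of_integrable_abs_pow {α : Type*} [MeasurableSpace α]
    {μ : Measure α} {f : α → ℝ} {p : ℕ} (hf : AEStronglyMeasurable f μ)
    (h : Integrable (fun x => |f x| ^ p) μ) : MemLp f p μ := by
  rcases eq_or_ne p 0 with rfl | hp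
  · simpa using hf
  · rw [← integrable_norm_rpow_iff hf (by exact_mod_cast hp) (by simp)]
    simpa using h

theorem MeasureTheory.MemLp.integrable_pow_of_le {α : Type*} [MeasurableSpace α] {μ : Measure α}
    [IsFiniteMeasure μ] {f : α → ℝ} {p r : ℕ} (hf : MemLp f p μ) (hr : r ≤ p) :
    Integrable (fun x => f x ^ r) μ := by
  refine (integrable_norm_iff (hf.aestronglyMeasurable.pow r)).1 ?_
  simpa [norm_pow] using (hf.mono_exponent (by exact_mod_cast hr)).integrable_norm_pow'

theorem integrable_sum_pow_pi {ρ : Measure ℝ} [IsProbabilityMeasure ρ] {p r : ℕ}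
    (hρ : MemLp id p ρ) (hr : r ≤ p) (n : ℕ) :
    Integrable (fun y : Fin n → ℝ => (∑ i, y i) ^ r) (Measure.pi fun _ => ρ) :=
  (memLp_finsetSum _ fun i _ =>
    hρ.comp_measurePreserving (measurePreserving_eval _ i)).integrable_pow_of_le hr

def countAbove {n : ℕ} (c : ℝ) (y : Fin n → ℝ) : ℝ := ∑ i, if c < |y i| then 1 else 0

theorem measurable_countAbove (n : ℕ) (c : ℝ) : Measurable (countAbove (n := n) c) :=
  Finset.measurable_sum _ fun i _ => Measurable.ite
    (measurableSet_lt measurable_const (measurable_pi_apply i).abs)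
    measurable_const measurable_const

theorem norm_countAbove_le {n : ℕ} (c : ℝ) (y : Fin n → ℝ) : ‖countAbove c y‖ ≤ n :=
  calc ‖countAbove c y‖ ≤ ∑ i, ‖if c < |y i| then (1 : ℝ) else 0‖ := norm_sum_le _ _
    _ ≤ ∑ _i : Fin n, (1 : ℝ) := sum_le_sum fun i _ => by split_ifs <;> simp
    _ = n := by simp

theorem map_rows_eq_pi {k : ℕ} {Ω : Type*} [MeasurableSpace Ω] {μ : Measure Ω}
    {ξ : ℕ → Fin k → Ω → ℝ} {ξ₀ : Ω → ℝ} (hmeas : ∀ i j, Measurable (ξ i j))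
    (hindep : iIndepFun (fun p : ℕ × Fin k => ξ p.1 p.2) μ)
    (hident : ∀ i j, IdentDistrib (ξ i j) ξ₀ μ μ) (n : ℕ) :
    μ.map (fun ω (j : Fin k) (i : Fin n) => ξ i j ω)
      = Measure.pi fun _ : Fin k => Measure.pi fun _ : Fin n => μ.map ξ₀ := by
  have hinj : Function.Injective fun p : Fin k × Fin n => ((p.2 : ℕ), p.1) := by
    rintro ⟨j, i⟩ ⟨j', i'⟩ h
    simp_all [Fin.val_inj]
  rw [(hindep.precomp hinj).map_curry_eq_pi fun p => hmeas _ _]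
  simp_rw [(hident _ _).map_eq]

theorem vandermonde_exchangeable_count_general
    (k : ℕ) {Ω : Type} [MeasurableSpace Ω] (μ : Measure Ω) [IsProbabilityMeasure μ]
    (ξ : ℕ → Fin k → Ω → ℝ) (ξ₀ : Ω → ℝ) (hmeas₀ : Measurable ξ₀)
    (hmeas : ∀ i j, Measurable (ξ i j))
    (hindep : iIndepFun (fun p : ℕ × Fin k => ξ p.1 p.2) μ)
    (hident : ∀ i j, IdentDistrib (ξ i j) ξ₀ μ μ)
    (S : ℕ → Ω → Fin k → ℝ)
    (hS : ∀ n ω j, S n ω j = ∑ i ∈ Finset.range n, ξ i j ω)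
    (hmom : Integrable (fun ω => |ξ₀ ω| ^ (k - 1)) μ)
    (c : ℝ) (x : Fin k → ℝ) (n : ℕ)
    (Sig : Ω → ℝ)
    (hSig : ∀ ω, Sig ω = ∑ i ∈ Finset.range n, ∑ j : Fin k,
        if c < |ξ i j ω| then (1 : ℝ) else 0) :
    ∫ ω, vdm k (fun j => x j + S n ω j) * Sig ω ∂μ
      = vdm k x * ∫ ω, Sig ω ∂μ := by
  set M : Ω → Fin k → Fin n → ℝ := fun ω j i => ξ i j ω
  set ν : Measure (Fin n → ℝ) := Measure.pi fun _ => μ.map ξ₀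
  set Z : (Fin n → ℝ) → ℝ := fun y => ∑ i, y i
  have : IsProbabilityMeasure (μ.map ξ₀) :=
    Measure.isProbabilityMeasure_map hmeas₀.aemeasurable
  have hZpow (r : ℕ) (hr : r < k) : Integrable (fun y => Z y ^ r) ν :=
    integrable_sum_pow_pi ((memLp_map_measure_iff aestronglyMeasurable_id hmeas₀.aemeasurable).2
      (memLp_of_integrable_abs_pow hmeas₀.aestronglyMeasurable hmom)) (by omega) n
  have hcore := integral_vdm_add_mul_sum ν hZpow (fun r hr => (hZpow r hr).mul_bdd
    (measurable_countAbove n c).aestronglyMeasurable (ae_of_all _ (norm_countAbove_le c))) x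
  have hSZ (ω : Ω) : S n ω = fun j => Z (M ω j) := by
    ext j
    rw [hS]
    exact (Fin.sum_univ_eq_sum_range (fun i => ξ i j ω) n).symm
  have hSigW (ω : Ω) : Sig ω = ∑ j, countAbove c (M ω j) := by
    rw [hSig, sum_comm]
    exact sum_congr rfl fun j _ => (Fin.sum_univ_eq_sum_range (fun i => _) n).symm
  have hM : Measurable M := by fun_prop
  have hΦ : Measurable fun y : Fin k → Fin n → ℝ => vdm k (fun j => x j + Z (y j)) :=
    (continuous_vdm k).measurable.comp (by fun_prop)
  have hΨ : Measurable fun y : Fin k → Fin n → ℝ => ∑ j, countAbove c (y j) :=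
    Finset.measurable_sum _ fun j _ => (measurable_countAbove n c).comp (measurable_pi_apply j)
  calc ∫ ω, vdm k (fun j => x j + S n ω j) * Sig ω ∂μ
      = ∫ ω, vdm k (fun j => x j + Z (M ω j)) * ∑ j, countAbove c (M ω j) ∂μ := by
        simp_rw [hSZ, hSigW]
    _ = ∫ y, vdm k (fun j => x j + Z (y j)) * ∑ j, countAbove c (y j) ∂(μ.map M) :=
      (integral_map hM.aemeasurable (hΦ.mul hΨ).aestronglyMeasurable).symm
    _ = vdm k x * ∫ y, ∑ j, countAbove c (y j) ∂(μ.map M) := by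
      rw [map_rows_eq_pi hmeas hindep hident n]
      exact hcore
    _ = vdm k x * ∫ ω, Sig ω ∂μ := by
      rw [integral_map hM.aemeasurable hΨ.aestronglyMeasurable]
      simp_rw [hSigW]

/-- exchangeability identity E[Δ(x+S_n)·Σ_n] = Δ(x)·E[Σ_n], where
Σ_n counts the increments exceeding the threshold c in absolute value. -/
theorem vandermonde_exchangeable_count
    (k : ℕ) {Ω : Type} [MeasurableSpace Ω] (μ : Measure Ω) [IsProbabilityMeasure μ]
    (ξ : ℕ → Fin k → Ω → ℝ) (ξ₀ : Ω → ℝ) (hmeas₀ : Measurable ξ₀)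
    (hmeas : ∀ i j, Measurable (ξ i j))
    (hindep : iIndepFun (fun p : ℕ × Fin k => ξ p.1 p.2) μ)
    (hident : ∀ i j, IdentDistrib (ξ i j) ξ₀ μ μ)
    (hmean : ∫ ω, ξ₀ ω ∂μ = 0)
    (S : ℕ → Ω → Fin k → ℝ)
    (hS : ∀ n ω j, S n ω j = ∑ i ∈ Finset.range n, ξ i j ω)
    (hSmeas : ∀ n, StronglyMeasurable (S n))
    (hmom : Integrable (fun ω => |ξ₀ ω| ^ (k - 1)) μ)
    (c : ℝ) (hc : 0 < c) (x : Fin k → ℝ) (n : ℕ)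
    (Sig : Ω → ℝ)
    (hSig : ∀ ω, Sig ω = ∑ i ∈ Finset.range n, ∑ j : Fin k,
        if c < |ξ i j ω| then (1 : ℝ) else 0)
    (hint : Integrable (fun ω => vdm k (fun j => x j + S n ω j) * Sig ω) μ) :
    ∫ ω, vdm k (fun j => x j + S n ω j) * Sig ω ∂μ
      = vdm k x * ∫ ω, Sig ω ∂μ :=
  vandermonde_exchangeable_count_general k μ ξ ξ₀ hmeas₀ hmeas hindep hident S hS hmom c x n Sig
    hSig
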